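/- For all natural numbers m and n, there is a bijection between the set of faces of the twisted n-cube of dimension m (functions f : Fin n → Option Bool with exactly m indices i satisfying f i = none) and the set of injective dimension-preserving graph morphisms from the twisted m-cube to the twisted n-cube. -/

import Mathlib

/-- Edge relation of the twisted n-cube. -/
def TwE (n : ℕ) (x y : Fin n → Bool) : Prop :=
  x = y ∨ ∃ i : Fin n, (∀ j, j ≠ i → x j = y j) ∧ y i = !(x i) ∧
    (x i = true ↔ Odd (Finset.univ.filter (fun j : Fin n => j < i ∧ x j = false)).card)

/-- Graph morphisms between directed graphs given by edge relations. -/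
def IsGraphHom {V V' : Type*} (E : V → V → Prop) (E' : V' → V' → Prop) (g : V → V') : Prop :=
  ∀ x y, E x y → E' (g x) (g y)

/-- The pair (x, y) is a non-loop edge flipping exactly coordinate i. -/
def Flips {n : ℕ} (x y : Fin n → Bool) (i : Fin n) : Prop :=
  x i ≠ y i ∧ ∀ j, j ≠ i → x j = y j

/-- A map between cube vertex sets is dimension-preserving. -/
def DimPres {m n : ℕ} (g : (Fin m → Bool) → (Fin n → Bool)) : Prop :=
  ∀ x₁ y₁ x₂ y₂ (i : Fin m), Flips x₁ y₁ i → Flips x₂ y₂ i →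
    (g x₁ = g y₁ ∧ g x₂ = g y₂) ∨
    ∃ j : Fin n, Flips (g x₁) (g y₁) j ∧ Flips (g x₂) (g y₂) j

/-!
For a vertex `x` let `falseParity x i` be the parity of the number of `j ≤ i` with `x j = false`.
The twisting condition says that the edge from `x` flipping `i` is present iff
`falseParity x i = 1`; flipping `i` toggles `falseParity · t` exactly for `t ≥ i`, so every cube
edge carries exactly one orientation, a vertex is determined by its parities, and the parities
on any set of coordinates can be prescribed while the other coordinates stay fixed.

A face `f` with free coordinates `φ 0 < ⋯ < φ (m - 1)` thus yields the map sending `z` to the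
vertex that agrees with `f` on the fixed coordinates and has parity `falseParity z k` at `φ k`;
it sends flips of `k` to flips of `φ k` with the same orientation. Conversely an injective
dimension-preserving morphism sends all flips of `k` to flips of a single coordinate `ψ k`
preserving parities; comparing parities after a flip of `k'` gives `ψ k' ≤ ψ k ↔ k' ≤ k`, so `ψ`
is increasing, and the morphism is the one of the face that is free exactly on the range of `ψ`.
-/

namespace TwistedCube

open Finset

def Face (m n : ℕ) : Type := {f : Fin n → Option Bool // #{i | f i = none} = m}

def CubeEmbedding (m n : ℕ) : Type :=
  {g : (Fin m → Bool) → (Fin n → Bool) //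
    IsGraphHom (TwE m) (TwE n) g ∧ DimPres g ∧ Function.Injective g}

variable {n : ℕ}

def falseParity (x : Fin n → Bool) (i : Fin n) : ZMod 2 :=
  ∑ j ∈ Iic i, if x j = false then 1 else 0

def flipAt (x : Fin n → Bool) (i : Fin n) : Fin n → Bool :=
  Function.update x i (!x i)

lemma flips_flipAt (x : Fin n → Bool) (i : Fin n) : Flips x (flipAt x i) i :=
  ⟨by simp [flipAt], fun j hj => by simp [flipAt, hj]⟩

@[simp] lemma flipAt_flipAt (x : Fin n → Bool) (i : Fin n) : flipAt (flipAt x i) i = x := by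
  simp [flipAt]

lemma _root_.Flips.eq_flipAt {x y : Fin n → Bool} {i : Fin n} (h : Flips x y i) :
    y = flipAt x i := by
  funext j
  by_cases hj : j = i
  · subst hj
    have := h.1
    cases hx : x j <;> cases hy : y j <;> simp_all [flipAt]
  · simp [flipAt, hj, h.2 j hj]

lemma _root_.Flips.symm {x y : Fin n → Bool} {i : Fin n} (h : Flips x y i) : Flips y x i :=
  ⟨h.1.symm, fun j hj => (h.2 j hj).symm⟩

lemma _root_.Flips.ne {x y : Fin n → Bool} {i : Fin n} (h : Flips x y i) : x ≠ y :=
  fun hxy => h.1 (congrFun hxy i)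

lemma _root_.Flips.unique {x y : Fin n → Bool} {i i' : Fin n} (h : Flips x y i)
    (h' : Flips x y i') : i = i' :=
  by_contra fun hne => h.1 (h'.2 i hne)

lemma falseParity_eq_add (x : Fin n → Bool) (i : Fin n) :
    falseParity x i = (#{j | j < i ∧ x j = false} : ZMod 2) + if x i = false then 1 else 0 := by
  rw [falseParity, ← Iio_insert, sum_insert notMem_Iio_self, add_comm, sum_boole]
  congr 3
  ext j
  simp

lemma falseParity_flipAt (x : Fin n → Bool) (i t : Fin n) :
    falseParity (flipAt x i) t = falseParity x t + if i ≤ t then 1 else 0 := by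
  have hpt : ∀ j, (if flipAt x i j = false then (1 : ZMod 2) else 0) =
      (if x j = false then 1 else 0) + if i = j then 1 else 0 := by
    intro j
    by_cases hj : j = i
    · subst hj
      simp only [flipAt, Function.update_self, if_true]
      cases x j <;> decide
    · simp [flipAt, hj, Ne.symm hj]
  simp only [falseParity, hpt, sum_add_distrib, sum_ite_eq, mem_Iic]

lemma _root_.Flips.falseParity_eq_add_one {x y : Fin n → Bool} {i : Fin n} (h : Flips x y i) :
    falseParity y i = falseParity x i + 1 := by
  rw [h.eq_flipAt, falseParity_flipAt, if_pos le_rfl]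

lemma twE_iff {x y : Fin n → Bool} :
    TwE n x y ↔ x = y ∨ ∃ i, Flips x y i ∧ falseParity x i = 1 := by
  refine or_congr_right (exists_congr fun i => ?_)
  have twist : (x i = true ↔ Odd #{j | j < i ∧ x j = false}) ↔ falseParity x i = 1 := by
    rw [falseParity_eq_add, ← ZMod.natCast_eq_one_iff_odd]
    generalize (#{j | j < i ∧ x j = false} : ZMod 2) = s
    cases x i <;> revert s <;> decide
  rw [twist, Flips, Bool.eq_not, ne_comm]
  tauto

lemma falseParity_eq_iff_of_eqOn_lt {x y : Fin n → Bool} {i : Fin n} (h : ∀ j < i, x j = y j) :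
    falseParity x i = falseParity y i ↔ x i = y i := by
  have hlt : #{j | j < i ∧ x j = false} = #{j | j < i ∧ y j = false} :=
    congrArg card (filter_congr fun j _ => and_congr_right fun hj => by rw [h j hj])
  rw [falseParity_eq_add, falseParity_eq_add, hlt, add_right_inj]
  cases x i <;> cases y i <;> decide

lemma eq_of_forall_falseParity_eq_or_eq {x y : Fin n → Bool}
    (h : ∀ i, falseParity x i = falseParity y i ∨ x i = y i) : x = y := by
  funext i
  induction i using WellFoundedLT.induction with
  | _ i ih => exact (h i).elim (falseParity_eq_iff_of_eqOn_lt ih).mp id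

-- Prescribe the parities at the coordinates of `s` in increasing order: flipping the new maximum
-- `a` changes the parities at and above `a` only.
lemma exists_falseParity_eq_on (s : Finset (Fin n)) (x : Fin n → Bool) (c : Fin n → ZMod 2) :
    ∃ w : Fin n → Bool, (∀ j ∉ s, w j = x j) ∧ ∀ j ∈ s, falseParity w j = c j := by
  induction s using Finset.induction_on_max with
  | empty => exact ⟨x, fun _ _ => rfl, by simp⟩
  | insert a s hlt ih =>
    obtain ⟨w, hout, hin⟩ := ih
    by_cases ha : falseParity w a = c a
    · exact ⟨w, fun j hj => hout j (fun h => hj (mem_insert_of_mem h)),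
        (forall_mem_insert _ _ _).mpr ⟨ha, hin⟩⟩
    · refine ⟨flipAt w a, fun j hj => ?_,
        (forall_mem_insert _ _ _).mpr ⟨?_, fun j hj => ?_⟩⟩
      · rw [flipAt, Function.update_of_ne (ne_of_mem_of_not_mem (mem_insert_self a s) hj).symm]
        exact hout j (fun h => hj (mem_insert_of_mem h))
      · rw [falseParity_flipAt, if_pos le_rfl]
        exact (by decide : ∀ p q : ZMod 2, p ≠ q → p + 1 = q) _ _ ha
      · rw [falseParity_flipAt, if_neg (hlt j hj).not_ge, add_zero, hin j hj]

lemma flipAt_induction {p : (Fin n → Bool) → Prop} (x₀ : Fin n → Bool) (h₀ : p x₀)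
    (hflip : ∀ x i, p x → p (flipAt x i)) (x : Fin n → Bool) : p x := by
  suffices ∀ s : Finset (Fin n), ∀ x, (∀ i ∉ s, x i = x₀ i) → p x from
    this univ x (by simp)
  intro s
  induction s using Finset.induction_on with
  | empty => exact fun x hx => (funext fun i => hx i (notMem_empty i)) ▸ h₀
  | insert a s _ ih =>
    intro x hx
    by_cases ha : x a = x₀ a
    · refine ih x fun i hi => ?_
      by_cases hia : i = a
      · exact hia ▸ ha
      · exact hx i (by simp [hia, hi])
    · rw [← flipAt_flipAt x a]
      refine hflip _ a (ih _ fun i hi => ?_)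
      by_cases hia : i = a
      · subst hia
        simpa [flipAt, Bool.eq_not] using ha
      · rw [flipAt, Function.update_of_ne hia]
        exact hx i (by simp [hia, hi])

variable {m : ℕ}

lemma exists_flips_falseParity_eq_one {g : (Fin m → Bool) → Fin n → Bool}
    (hg : IsGraphHom (TwE m) (TwE n) g) (hinj : Function.Injective g) {x y : Fin m → Bool}
    {i : Fin m} (h : Flips x y i) (hx : falseParity x i = 1) :
    ∃ j, Flips (g x) (g y) j ∧ falseParity (g x) j = 1 := by
  have hedge := hg x y (twE_iff.mpr (Or.inr ⟨i, h, hx⟩))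
  rw [twE_iff] at hedge
  exact hedge.resolve_left fun hxy => h.ne (hinj hxy)

lemma exists_flips_falseParity_eq {g : (Fin m → Bool) → Fin n → Bool}
    (hg : IsGraphHom (TwE m) (TwE n) g) (hinj : Function.Injective g) {x y : Fin m → Bool}
    {i : Fin m} (h : Flips x y i) :
    ∃ j, Flips (g x) (g y) j ∧ falseParity (g x) j = falseParity x i := by
  rcases (by decide : ∀ p : ZMod 2, p = 0 ∨ p = 1) (falseParity x i) with hx | hx
  · have hy : falseParity y i = 1 := by rw [h.falseParity_eq_add_one, hx, zero_add]
    obtain ⟨j, hj, hgy⟩ := exists_flips_falseParity_eq_one hg hinj h.symm hy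
    refine ⟨j, hj.symm, ?_⟩
    rw [hj.falseParity_eq_add_one, hgy, hx]
    rfl
  · obtain ⟨j, hj, hgx⟩ := exists_flips_falseParity_eq_one hg hinj h hx
    exact ⟨j, hj, hgx.trans hx.symm⟩

namespace Face

variable (f : Face m n)

def freeCoord : Fin m ↪o Fin n := orderEmbOfFin _ f.2

lemma mem_range_freeCoord {j : Fin n} : j ∈ Set.range f.freeCoord ↔ f.1 j = none := by
  simp [freeCoord, range_orderEmbOfFin]

lemma exists_vertex_falseParity_freeCoord (z : Fin m → Bool) :
    ∃ w : Fin n → Bool, (∀ j v, f.1 j = some v → w j = v) ∧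
      ∀ k, falseParity w (f.freeCoord k) = falseParity z k := by
  obtain ⟨w, hfixed, hfree⟩ := exists_falseParity_eq_on {i | f.1 i = none}
    (fun j => (f.1 j).getD true)
    (fun j => ∑ t with f.freeCoord t ≤ j, if z t = false then 1 else 0)
  refine ⟨w, fun j v hj => ?_, fun k => ?_⟩
  · rw [hfixed j (by simp [hj]), hj, Option.getD_some]
  · rw [hfree _ (by simpa using f.mem_range_freeCoord.mp ⟨k, rfl⟩)]
    simp only [falseParity, OrderEmbedding.le_iff_le, filter_ge_eq_Iic]

noncomputable def embed (z : Fin m → Bool) : Fin n → Bool :=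
  (f.exists_vertex_falseParity_freeCoord z).choose

lemma embed_apply_of_eq_some {j : Fin n} {v : Bool} (hj : f.1 j = some v) (z : Fin m → Bool) :
    f.embed z j = v :=
  (f.exists_vertex_falseParity_freeCoord z).choose_spec.1 j v hj

lemma falseParity_embed (z : Fin m → Bool) (k : Fin m) :
    falseParity (f.embed z) (f.freeCoord k) = falseParity z k :=
  (f.exists_vertex_falseParity_freeCoord z).choose_spec.2 k

lemma eq_embed {w : Fin n → Bool} {z : Fin m → Bool}
    (hfixed : ∀ j v, f.1 j = some v → w j = v)
    (hfree : ∀ k, falseParity w (f.freeCoord k) = falseParity z k) : w = f.embed z := by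
  refine eq_of_forall_falseParity_eq_or_eq fun j => ?_
  cases hj : f.1 j with
  | none =>
    obtain ⟨k, rfl⟩ := f.mem_range_freeCoord.mpr hj
    exact Or.inl (by rw [hfree, falseParity_embed])
  | some v => exact Or.inr (by rw [hfixed j v hj, f.embed_apply_of_eq_some hj])

lemma embed_flipAt (z : Fin m → Bool) (k : Fin m) :
    f.embed (flipAt z k) = flipAt (f.embed z) (f.freeCoord k) := by
  refine (f.eq_embed (fun j v hj => ?_) fun t => ?_).symm
  · have hjk : j ≠ f.freeCoord k := by
      rintro rfl
      simp [f.mem_range_freeCoord.mp ⟨k, rfl⟩] at hj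
    rw [flipAt, Function.update_of_ne hjk, f.embed_apply_of_eq_some hj]
  · simp only [falseParity_flipAt, falseParity_embed, OrderEmbedding.le_iff_le]

lemma flips_embed {z z' : Fin m → Bool} {k : Fin m} (h : Flips z z' k) :
    Flips (f.embed z) (f.embed z') (f.freeCoord k) := by
  rw [h.eq_flipAt, embed_flipAt]
  exact flips_flipAt _ _

lemma isGraphHom_embed : IsGraphHom (TwE m) (TwE n) f.embed := by
  intro z z' h
  rw [twE_iff] at h ⊢
  rcases h with rfl | ⟨k, hk, hpar⟩
  · exact Or.inl rfl
  · exact Or.inr ⟨_, f.flips_embed hk, by rw [falseParity_embed, hpar]⟩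

lemma dimPres_embed : DimPres f.embed :=
  fun _ _ _ _ _ h₁ h₂ => Or.inr ⟨_, f.flips_embed h₁, f.flips_embed h₂⟩

lemma embed_injective : Function.Injective f.embed := fun z z' h =>
  eq_of_forall_falseParity_eq_or_eq fun k =>
    Or.inl (by rw [← falseParity_embed, h, falseParity_embed])

noncomputable def toCubeEmbedding : CubeEmbedding m n :=
  ⟨f.embed, f.isGraphHom_embed, f.dimPres_embed, f.embed_injective⟩

end Face

namespace CubeEmbedding

variable (g : CubeEmbedding m n)

noncomputable def imageCoord (k : Fin m) : Fin n :=
  (exists_flips_falseParity_eq g.2.1 g.2.2.2 (flips_flipAt (fun _ => true) k)).choose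

lemma flips_imageCoord (z : Fin m → Bool) (k : Fin m) :
    Flips (g.1 z) (g.1 (flipAt z k)) (g.imageCoord k) := by
  have hbase := (exists_flips_falseParity_eq g.2.1 g.2.2.2
    (flips_flipAt (fun _ => true) k)).choose_spec.1
  obtain ⟨heq, -⟩ | ⟨j, hj, hj₀⟩ :=
    g.2.2.1 _ _ _ _ k (flips_flipAt z k) (flips_flipAt _ k)
  · exact absurd (g.2.2.2 heq) (flips_flipAt z k).ne
  · rwa [hj₀.unique hbase] at hj

lemma falseParity_imageCoord (z : Fin m → Bool) (k : Fin m) :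
    falseParity (g.1 z) (g.imageCoord k) = falseParity z k := by
  obtain ⟨j, hj, hpar⟩ := exists_flips_falseParity_eq g.2.1 g.2.2.2 (flips_flipAt z k)
  rwa [hj.unique (g.flips_imageCoord z k)] at hpar

lemma imageCoord_le_imageCoord_iff {k k' : Fin m} :
    g.imageCoord k' ≤ g.imageCoord k ↔ k' ≤ k := by
  have h := g.falseParity_imageCoord (flipAt (fun _ => true) k') k
  rw [(g.flips_imageCoord _ k').eq_flipAt, falseParity_flipAt, falseParity_flipAt,
    falseParity_imageCoord, add_right_inj] at h
  by_cases h₁ : g.imageCoord k' ≤ g.imageCoord k <;> by_cases h₂ : k' ≤ k <;>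
    simp [h₁, h₂] at h ⊢

lemma imageCoord_strictMono : StrictMono g.imageCoord :=
  strictMono_of_le_iff_le fun _ _ => g.imageCoord_le_imageCoord_iff.symm

lemma apply_eq_of_notMem_range {j : Fin n} (hj : j ∉ Set.range g.imageCoord)
    (z : Fin m → Bool) : g.1 z j = g.1 (fun _ => true) j := by
  refine flipAt_induction (p := fun z => g.1 z j = g.1 (fun _ => true) j) _ rfl
    (fun z k hz => ?_) z
  rw [← hz]
  exact ((g.flips_imageCoord z k).2 j fun hjk => hj ⟨k, hjk.symm⟩).symm

noncomputable def toFace : Face m n :=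
  ⟨fun j => if j ∈ univ.image g.imageCoord then none else some (g.1 (fun _ => true) j), by
    convert card_image_of_injective univ g.imageCoord_strictMono.injective using 2
    · ext j
      simp
    · simp⟩

lemma freeCoord_toFace : ⇑g.toFace.freeCoord = g.imageCoord :=
  (orderEmbOfFin_unique _ (fun k => by simp [toFace]) g.imageCoord_strictMono).symm

lemma toFace_toCubeEmbedding : g.toFace.toCubeEmbedding = g := by
  refine Subtype.ext (funext fun z => (g.toFace.eq_embed (fun j v hj => ?_) fun k => ?_).symm)
  · simp only [toFace, mem_image_univ_iff_mem_range] at hj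
    split_ifs at hj with hj_range
    rw [g.apply_eq_of_notMem_range hj_range, Option.some_inj.mp hj]
  · rw [freeCoord_toFace, falseParity_imageCoord]

end CubeEmbedding

lemma Face.imageCoord_toCubeEmbedding (f : Face m n) :
    f.toCubeEmbedding.imageCoord = f.freeCoord :=
  funext fun k => (f.toCubeEmbedding.flips_imageCoord (fun _ => true) k).unique
    (f.flips_embed (flips_flipAt _ k))

lemma Face.toCubeEmbedding_toFace (f : Face m n) : f.toCubeEmbedding.toFace = f := by
  refine Subtype.ext (funext fun j => ?_)
  simp only [CubeEmbedding.toFace, imageCoord_toCubeEmbedding, mem_image_univ_iff_mem_range,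
    mem_range_freeCoord]
  cases hj : f.1 j with
  | none => exact if_pos rfl
  | some v => exact (if_neg (by simp)).trans (congrArg some (f.embed_apply_of_eq_some hj _))

noncomputable def faceEquiv : Face m n ≃ CubeEmbedding m n where
  toFun := Face.toCubeEmbedding
  invFun := CubeEmbedding.toFace
  left_inv := Face.toCubeEmbedding_toFace
  right_inv := CubeEmbedding.toFace_toCubeEmbedding

end TwistedCube

theorem stmt11 (m n : ℕ) :
    Nonempty
      ({f : Fin n → Option Bool //
          (Finset.univ.filter (fun i => f i = none)).card = m} ≃
       {g : (Fin m → Bool) → (Fin n → Bool) //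
          IsGraphHom (TwE m) (TwE n) g ∧ DimPres g ∧ Function.Injective g}) :=
  ⟨TwistedCube.faceEquiv⟩
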